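/- arXiv:2303.13614 — 2 statements merged into one kernel-verified Lean document; each statement's English description precedes it below -/
import Mathlib

section
/- Let R be a commutative ring, τ ∈ R, and h_1, ..., h_k ∈ R (k ≥ 2) elements satisfying h_i^2 + τ·h_i = 0 for all i, and h_i = h_j + (j - i)·τ for all i, j (equivalently h_{i+1} = h_i + τ). Then the product ∏_{i=1}^{k-1} (h_i + h_{i+1} + τ) equals ∑_{j=0}^{k-1} τ^{k-1-j} · e_j(h_1, ..., h_k), where e_j denotes the j-th elementary symmetric polynomial in k variables. -/
/-!
Since `h₂ = h₁ + τ` and both satisfy `x² + τx = 0`, we get `h₁h₂ = 0` and `2τh₂ = 0`.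
The sum `S_m = ∑_{j<m} τ^{m-1-j} e_j(h₁, …, h_m)` obeys `S_{m+1} = (τ + h_{m+1}) S_m + e_m`,
and `e_m = h₁ ⋯ h_m = 0` for `m ≥ 2`, so `S_k = (τ + h₁ + h₂) ∏_{i=3}^k (τ + h_i)`.
For `k = 2` both sides are `h₁ + h₂ + τ`. For `k ≥ 3` both vanish: the product on the left contains
`(h₁ + h₂ + τ)(h₂ + h₃ + τ) = 4(h₂² + τh₂)`, and `S_k` contains `(τ + h₁ + h₂)(τ + h₃) = 2τh₂`.
-/

open Finset

namespace Multiset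

variable {R : Type*} [CommSemiring R]

lemma esymm_zero (s : Multiset R) : s.esymm 0 = 1 := by
  simp [esymm]

lemma esymm_card (s : Multiset R) : s.esymm (card s) = s.prod := by
  simp [esymm, powersetCard_self]

lemma esymm_cons_succ (a : R) (s : Multiset R) (n : ℕ) :
    (a ::ₘ s).esymm (n + 1) = s.esymm (n + 1) + a * s.esymm n := by
  simp [esymm, powersetCard_cons, sum_map_mul_left]

end Multiset

lemma prod_Icc_one_eq_zero {M : Type*} [CommMonoidWithZero M] {f : ℕ → M} (hf : f 1 * f 2 = 0)
    {m : ℕ} (hm : 2 ≤ m) : ∏ i ∈ Icc 1 m, f i = 0 := by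
  have hsub : ({1, 2} : Finset ℕ) ⊆ Icc 1 m := by
    intro i hi
    simp only [mem_insert, mem_singleton] at hi
    simp only [mem_Icc]
    omega
  simpa [hf] using prod_dvd_prod_of_subset _ _ f hsub

section TruncEsymmSum

variable {R : Type*} [CommSemiring R]

/-- `(∏_{a ∈ s} (τ + a) - e_m(s)) / τ` for `m = card s`, written without division. -/
def truncEsymmSum (τ : R) (s : Multiset R) : R :=
  ∑ j ∈ range (Multiset.card s), τ ^ (Multiset.card s - 1 - j) * s.esymm j

lemma truncEsymmSum_cons (τ a : R) (s : Multiset R) :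
    truncEsymmSum τ (a ::ₘ s) = (τ + a) * truncEsymmSum τ s + s.prod := by
  have hS : truncEsymmSum τ s =
      ∑ j ∈ range (Multiset.card s), τ ^ (Multiset.card s - (j + 1)) * s.esymm j := by
    simp only [truncEsymmSum, Nat.sub_sub, Nat.add_comm 1]
  have hcons : truncEsymmSum τ (a ::ₘ s) =
      ∑ j ∈ range (Multiset.card s), τ ^ (Multiset.card s - (j + 1)) * s.esymm (j + 1) +
        a * truncEsymmSum τ s + τ ^ Multiset.card s := by
    rw [truncEsymmSum, Multiset.card_cons, sum_range_succ', hS, mul_sum, ← sum_add_distrib]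
    simp only [Multiset.esymm_cons_succ, Multiset.esymm_zero, Nat.add_sub_cancel, Nat.sub_zero,
      mul_one]
    congr 1
    exact sum_congr rfl fun j _ => by ring
  set m := Multiset.card s
  have hshift : ∑ j ∈ range (m + 1), τ ^ (m - j) * s.esymm j =
      ∑ j ∈ range m, τ ^ (m - (j + 1)) * s.esymm (j + 1) + τ ^ m := by
    rw [sum_range_succ', Multiset.esymm_zero, mul_one, Nat.sub_zero]
  have htop : ∑ j ∈ range (m + 1), τ ^ (m - j) * s.esymm j =
      τ * truncEsymmSum τ s + s.prod := by
    rw [sum_range_succ, Nat.sub_self, pow_zero, one_mul, Multiset.esymm_card, hS, mul_sum]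
    congr 1
    refine sum_congr rfl fun j hj => ?_
    have hj : j < m := mem_range.mp hj
    rw [← mul_assoc, ← pow_succ', show m - (j + 1) + 1 = m - j by omega]
  rw [hcons, add_right_comm, hshift.symm.trans htop]
  ring

lemma truncEsymmSum_Icc_succ (τ : R) (h : ℕ → R) (m : ℕ) :
    truncEsymmSum τ ((Icc 1 (m + 1)).val.map h) =
      (τ + h (m + 1)) * truncEsymmSum τ ((Icc 1 m).val.map h) + ∏ i ∈ Icc 1 m, h i := by
  rw [← insert_Icc_right_eq_Icc_add_one (by omega), insert_val_of_notMem (by simp),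
    Multiset.map_cons, truncEsymmSum_cons, prod_eq_multiset_prod]

lemma truncEsymmSum_Icc_of_mul_eq_zero (τ : R) {h : ℕ → R}
    (h12 : h 1 * h 2 = 0) {m : ℕ} (hm : 2 ≤ m) :
    truncEsymmSum τ ((Icc 1 m).val.map h) = (τ + h 1 + h 2) * ∏ i ∈ Icc 3 m, (τ + h i) := by
  induction m, hm using Nat.le_induction with
  | base =>
    rw [show 2 = 0 + 1 + 1 from rfl, truncEsymmSum_Icc_succ, truncEsymmSum_Icc_succ]
    simp only [zero_add, Icc_self, prod_singleton, Icc_eq_empty_of_lt, prod_empty, empty_val,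
      Multiset.map_zero, truncEsymmSum, Multiset.card_zero, range_zero, sum_empty, Nat.lt_add_one]
    ring
  | succ m hm ih =>
    rw [truncEsymmSum_Icc_succ, ih, prod_Icc_one_eq_zero h12 hm, prod_Icc_succ_top (by omega)]
    ring

end TruncEsymmSum

theorem stmt_2 {R : Type*} [CommRing R] (k : ℕ) (hk : 2 ≤ k) (τ : R) (h : ℕ → R)
    (hsq : ∀ i, 1 ≤ i → i ≤ k → h i ^ 2 + τ * h i = 0)
    (hstep : ∀ i, 1 ≤ i → i < k → h (i + 1) = h i + τ) :
    ∏ i ∈ Finset.Icc 1 (k - 1), (h i + h (i + 1) + τ) =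
      ∑ j ∈ Finset.range k, τ ^ (k - 1 - j) *
        ∑ t ∈ Finset.powersetCard j (Finset.Icc 1 k), ∏ i ∈ t, h i := by
  have h1 : h 1 = h 2 - τ := by linear_combination -hstep 1 le_rfl hk
  have hsq1 : (h 2 - τ) ^ 2 + τ * (h 2 - τ) = 0 := h1 ▸ hsq 1 le_rfl (by omega)
  have h12 : h 1 * h 2 = 0 := by rw [h1]; linear_combination hsq1
  have hsum : ∑ j ∈ range k, τ ^ (k - 1 - j) *
      ∑ t ∈ powersetCard j (Icc 1 k), ∏ i ∈ t, h i = truncEsymmSum τ ((Icc 1 k).val.map h) := by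
    simp [truncEsymmSum, esymm_map_val]
  rw [hsum, truncEsymmSum_Icc_of_mul_eq_zero τ h12 hk]
  obtain rfl | hk3 := hk.eq_or_lt
  · simp only [Nat.add_one_sub_one, Icc_self, prod_singleton, Icc_eq_empty_of_lt, prod_empty,
      Nat.lt_add_one]
    ring
  have h3 : h 3 = h 2 + τ := hstep 2 (by omega) hk3
  have hsq2 := hsq 2 (by omega) (by omega)
  have hleft : (h 1 + h 2 + τ) * (h 2 + h 3 + τ) = 0 := by
    rw [h1, h3]; linear_combination 4 * hsq2
  have hright : (τ + h 1 + h 2) * (τ + h 3) = 0 := by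
    rw [h1, h3]; linear_combination 3 * hsq2 - hsq1
  rw [prod_Icc_one_eq_zero hleft (by omega), ← mul_prod_erase _ _ (by simp; omega : 3 ∈ Icc 3 k),
    ← mul_assoc, hright, zero_mul]
end

section
/- Let R be a commutative ring, τ ∈ R, and h_0, h_1, h_2, ... ∈ R elements satisfying h_i^2 + τ·h_i = 0 and h_{i+1} = h_i + τ for all i ≥ 0. Then for all natural numbers n ≤ m, the element h_0^2 · h_1^2 · ... · h_{n-1}^2 · h_n · h_{n+1} · ... · h_{m-1} equals ∑_{s=0}^{n} (-1)^s · s! · C(n, s) · C(m, s) · τ^s · (h_0 · h_1 · ... · h_{m+n-s-1}). -/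
/-!
Writing `P k = h₀ h₁ ⋯ h_{k-1}`, the left-hand side is `P n * P m`. Since the `h_i` form an
arithmetic progression with difference `τ`, `h_i P k = P (k+1) + (i - k) τ P k`. Multiplying the
identity for `n` by `h_n` and applying this to every term, the coefficients obey the recursion of
the rook numbers `s! C(n,s) C(m,s)` of an `n × m` board, which finishes an induction on `n`.
-/

open Finset Nat

/-- The number of ways to place `s` non-attacking rooks on an `n × m` board. -/
def rookNumber (n m s : ℕ) : ℕ := s ! * n.choose s * m.choose s

@[simp]
lemma rookNumber_zero_right (n m : ℕ) : rookNumber n m 0 = 1 := by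
  simp [rookNumber]

lemma rookNumber_eq_zero_of_lt {n m s : ℕ} (h : n < s) : rookNumber n m s = 0 := by
  simp [rookNumber, Nat.choose_eq_zero_of_lt h]

-- The new row of an `(n+1) × m` board is either empty or holds a rook in one of `m - s` free columns.
lemma rookNumber_succ_succ (n m s : ℕ) :
    rookNumber (n + 1) m (s + 1) = rookNumber n m (s + 1) + (m - s) * rookNumber n m s := by
  have hcol : (s + 1)! * n.choose s * m.choose (s + 1) = (m - s) * rookNumber n m s := by
    rw [rookNumber, factorial_succ]
    calc (s + 1) * s ! * n.choose s * m.choose (s + 1)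
        = s ! * n.choose s * (m.choose (s + 1) * (s + 1)) := by ring
      _ = (m - s) * (s ! * n.choose s * m.choose s) := by rw [choose_succ_right_eq]; ring
  rw [rookNumber, rookNumber, choose_succ_succ, ← hcol]
  ring

lemma cast_rookNumber_succ_succ {R : Type*} [CommRing R] (n m s : ℕ) :
    (rookNumber (n + 1) m (s + 1) : R) =
      rookNumber n m (s + 1) + ((m : R) - s) * rookNumber n m s := by
  rw [rookNumber_succ_succ]
  rcases le_or_gt s m with hsm | hms
  · push_cast [hsm]
    ring
  · simp [rookNumber, Nat.choose_eq_zero_of_lt hms]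

section ArithmeticProgression

variable {R : Type*} [CommRing R] {τ : R} {h : ℕ → R}

lemma eq_add_mul_of_succ_eq_add (hstep : ∀ i, h (i + 1) = h i + τ) (i : ℕ) :
    h i = h 0 + i * τ := by
  induction i with
  | zero => simp
  | succ k ih => rw [hstep, ih]; push_cast; ring

lemma mul_prod_range_of_succ_eq_add (hstep : ∀ i, h (i + 1) = h i + τ) (i k : ℕ) :
    h i * ∏ j ∈ range k, h j =
      ∏ j ∈ range (k + 1), h j + ((i : R) - k) * τ * ∏ j ∈ range k, h j := by
  rw [prod_range_succ, eq_add_mul_of_succ_eq_add hstep i, eq_add_mul_of_succ_eq_add hstep k]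
  ring

theorem prod_range_mul_prod_range_of_succ_eq_add (hstep : ∀ i, h (i + 1) = h i + τ) (n m : ℕ) :
    (∏ i ∈ range n, h i) * ∏ i ∈ range m, h i =
      ∑ s ∈ range (n + 1), (rookNumber n m s : R) * (-τ) ^ s * ∏ i ∈ range (m + n - s), h i := by
  induction n with
  | zero => simp
  | succ n ih =>
    have hshift : ∀ s ∈ range (n + 1), h n * ∏ i ∈ range (m + n - s), h i =
        ∏ i ∈ range (m + n + 1 - s), h i - ((m : R) - s) * τ * ∏ i ∈ range (m + n - s), h i := by
      intro s hs
      have hsn : s ≤ n := Nat.lt_succ_iff.mp (mem_range.mp hs)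
      have hlen : m + n + 1 - s = m + n - s + 1 := by omega
      have hcast : ((m + n - s : ℕ) : R) = m + n - s := by
        rw [Nat.cast_sub (by omega)]
        push_cast
        ring
      rw [hlen, mul_prod_range_of_succ_eq_add hstep, hcast]
      ring
    calc (∏ i ∈ range (n + 1), h i) * ∏ i ∈ range m, h i
        = ∑ s ∈ range (n + 1),
            (rookNumber n m s : R) * (-τ) ^ s * (h n * ∏ i ∈ range (m + n - s), h i) := by
          rw [prod_range_succ, mul_comm _ (h n), mul_assoc, ih, mul_sum]
          exact sum_congr rfl fun s _ => by ring
      _ = ∑ s ∈ range (n + 1 + 1),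
              (rookNumber n m s : R) * (-τ) ^ s * ∏ i ∈ range (m + n + 1 - s), h i +
            ∑ s ∈ range (n + 1), ((m : R) - s) * rookNumber n m s * (-τ) ^ (s + 1) *
              ∏ i ∈ range (m + n - s), h i := by
          rw [sum_range_succ _ (n + 1), rookNumber_eq_zero_of_lt n.lt_succ_self, Nat.cast_zero,
            zero_mul, zero_mul, add_zero, ← sum_add_distrib]
          refine sum_congr rfl fun s hs => ?_
          rw [hshift s hs]
          ring
      _ = ∑ s ∈ range (n + 1 + 1),
            (rookNumber (n + 1) m s : R) * (-τ) ^ s * ∏ i ∈ range (m + (n + 1) - s), h i := by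
          simp only [sum_range_succ' _ (n + 1), cast_rookNumber_succ_succ, add_mul,
            sum_add_distrib, rookNumber_zero_right, Nat.add_sub_add_right, ← add_assoc]
          ring

end ArithmeticProgression

theorem stmt_4_general {R : Type*} [CommRing R] (τ : R) (h : ℕ → R)
    (hstep : ∀ i, h (i + 1) = h i + τ)
    (n m : ℕ) (hnm : n ≤ m) :
    (∏ i ∈ Finset.range n, h i ^ 2) * ∏ i ∈ Finset.Ico n m, h i =
      ∑ s ∈ Finset.range (n + 1),
        (-1 : R) ^ s * (s.factorial * n.choose s * m.choose s : ℕ) * τ ^ s *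
          ∏ i ∈ Finset.range (m + n - s), h i := by
  rw [prod_pow, sq, mul_assoc, prod_range_mul_prod_Ico h hnm,
    prod_range_mul_prod_range_of_succ_eq_add hstep]
  refine sum_congr rfl fun s _ => ?_
  rw [rookNumber, neg_pow]
  ring

theorem stmt_4 {R : Type*} [CommRing R] (τ : R) (h : ℕ → R)
    (hsq : ∀ i, h i ^ 2 + τ * h i = 0)
    (hstep : ∀ i, h (i + 1) = h i + τ)
    (n m : ℕ) (hnm : n ≤ m) :
    (∏ i ∈ Finset.range n, h i ^ 2) * ∏ i ∈ Finset.Ico n m, h i =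
      ∑ s ∈ Finset.range (n + 1),
        (-1 : R) ^ s * (s.factorial * n.choose s * m.choose s : ℕ) * τ ^ s *
          ∏ i ∈ Finset.range (m + n - s), h i :=
  stmt_4_general τ h hstep n m hnm
end
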